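/- Suppose v̲_h(μ) ≤ v̄_h(μ) for all μ and all h. For the prior construction of Result 3: given a product region C = ∏_h I_h of intervals, define Q|μ to select, whenever ∏_h [v̲_h(μ), v̄_h(μ)] ⊄ C, a rotation attaining an endpoint of the identified set that lies outside C. Then under the induced joint distribution P**, the events {λ^H(μ,Q) ∈ C} and {∏_h [v̲_h(μ), v̄_h(μ)] ⊆ C} coincide (up to null sets), so P**(λ^H ∈ C) = ℙ*_μ(∏_h [v̲_h(μ), v̄_h(μ)] ⊆ C). -/
import Mathlib


open MeasureTheory Set

theorem stmt5 {d H : ℕ} {Q : Type*}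
    (Pμ : Measure (Fin d → ℝ)) [IsProbabilityMeasure Pμ]
    (vlo vhi : Fin H → (Fin d → ℝ) → ℝ)
    (hlv : ∀ μ h, vlo h μ ≤ vhi h μ)
    (a b : Fin H → ℝ)
    (lam : (Fin d → ℝ) → Q → Fin H → ℝ)
    (hin : ∀ μ q h, lam μ q h ∈ Set.Icc (vlo h μ) (vhi h μ))
    (qsel : (Fin d → ℝ) → Q)
    (hsel : ∀ μ, ¬ (∀ h, Set.Icc (vlo h μ) (vhi h μ) ⊆ Set.Icc (a h) (b h)) →
      ∃ h, (lam μ (qsel μ) h = vhi h μ ∧ vhi h μ ∉ Set.Icc (a h) (b h)) ∨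
           (lam μ (qsel μ) h = vlo h μ ∧ vlo h μ ∉ Set.Icc (a h) (b h))) :
    {μ | ∀ h, lam μ (qsel μ) h ∈ Set.Icc (a h) (b h)} =
      {μ | ∀ h, Set.Icc (vlo h μ) (vhi h μ) ⊆ Set.Icc (a h) (b h)} ∧
    Pμ {μ | ∀ h, lam μ (qsel μ) h ∈ Set.Icc (a h) (b h)} =
      Pμ {μ | ∀ h, Set.Icc (vlo h μ) (vhi h μ) ⊆ Set.Icc (a h) (b h)} := by
  have key : {μ | ∀ h, lam μ (qsel μ) h ∈ Set.Icc (a h) (b h)} =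
      {μ | ∀ h, Set.Icc (vlo h μ) (vhi h μ) ⊆ Set.Icc (a h) (b h)} := by
    ext μ
    simp only [Set.mem_setOf_eq]
    constructor
    · intro hall
      by_contra hnot
      obtain ⟨h, hc⟩ := hsel μ hnot
      rcases hc with ⟨heq, hout⟩ | ⟨heq, hout⟩ <;> exact hout (heq ▸ hall h)
    · intro hsub h
      exact hsub h (hin μ (qsel μ) h)
  exact ⟨key, by rw [key]⟩
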